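/- arXiv:1002.4350 — 2 statements merged into one kernel-verified Lean document; each statement's English description precedes it below -/
import Mathlib

section
/- Let Γ be a connected multigraph with finite vertex set V in which every edge joining two distinct vertices is a bridge (a tree-like graph). Then Λ = Z, i.e. the degree class group Δ = Z/Λ is the trivial group. -/
open Finset

noncomputable section
open scoped Classical

variable {V : Type} [Fintype V] [DecidableEq V]

/-- The simple graph underlying a multigraph with multiplicity function `k`:
`u` and `v` are adjacent iff `u ≠ v` and some edge joins them. -/
def graphOf (k : V → V → ℕ) : SimpleGraph V where
  Adj u v := u ≠ v ∧ (0 < k u v ∨ 0 < k v u)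
  symm := ⟨fun u v h => ⟨h.1.symm, h.2.symm⟩⟩
  loopless := ⟨fun v h => h.1 rfl⟩

/-- The number of edges of a multigraph: loops plus half the ordered count. -/
def numEdges (k : V → V → ℕ) : ℕ :=
  (∑ v, k v v) + (∑ u, ∑ v ∈ Finset.univ.erase u, k u v) / 2

/-- The genus of a weighted graph: `∑ w(v) + b₁`, with `b₁ = #E - #V + 1`. -/
def genus (k : V → V → ℕ) (w : V → ℕ) : ℤ :=
  (∑ v, (w v : ℤ)) + ((numEdges k : ℤ) - (Fintype.card V : ℤ) + 1)

/-- Stability: connected, and each weight-zero vertex has valency at least 3. -/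
def IsStable (k : V → V → ℕ) (w : V → ℕ) : Prop :=
  (graphOf k).Connected ∧
    ∀ v, w v = 0 → 3 ≤ 2 * k v v + ∑ u ∈ Finset.univ.erase v, k u v

/-- `δ_A`: the number of edges joining `A` to its complement. -/
def deltaA (k : V → V → ℕ) (A : Finset V) : ℤ :=
  ∑ u ∈ A, ∑ v ∈ Aᶜ, (k u v : ℤ)

/-- `w_A = Σ_{v∈A} (2w(v) − 2 + 2k(v,v) + Σ_{u≠v} k(u,v))`. -/
def wA (k : V → V → ℕ) (w : V → ℕ) (A : Finset V) : ℤ :=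
  ∑ v ∈ A, (2 * (w v : ℤ) - 2 + 2 * (k v v : ℤ) + ∑ u ∈ Finset.univ.erase v, (k u v : ℤ))

/-- `d_A`: the total degree of a multidegree on the subset `A`. -/
def degA (d : V → ℤ) (A : Finset V) : ℤ := ∑ v ∈ A, d v

/-- `m_A(d) = d·w_A/(2g−2) − δ_A/2 ∈ ℚ`. -/
def mA (k : V → V → ℕ) (w : V → ℕ) (D : ℤ) (A : Finset V) : ℚ :=
  (D : ℚ) * (wA k w A : ℚ) / ((2 * genus k w - 2 : ℤ) : ℚ) - (deltaA k A : ℚ) / 2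

/-- A balanced multidegree of total degree `D`. -/
def IsBalanced (k : V → V → ℕ) (w : V → ℕ) (D : ℤ) (d : V → ℤ) : Prop :=
  degA d Finset.univ = D ∧ ∀ A : Finset V, mA k w D A ≤ (degA d A : ℚ)

/-- A strictly balanced multidegree of total degree `D`. -/
def IsStrictlyBalanced (k : V → V → ℕ) (w : V → ℕ) (D : ℤ) (d : V → ℤ) : Prop :=
  IsBalanced k w D d ∧
    ∀ A : Finset V, A ≠ ∅ → A ≠ Finset.univ → mA k w D A < (degA d A : ℚ)

/-- `(Γ,w)` is `d`-general if every balanced multidegree of total degree `d`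
is strictly balanced. -/
def IsDGeneral (k : V → V → ℕ) (w : V → ℕ) (D : ℤ) : Prop :=
  ∀ d : V → ℤ, IsBalanced k w D d → IsStrictlyBalanced k w D d

/-- The generator `c_v` of the lattice `Λ`. -/
def cvec (k : V → V → ℕ) (v : V) : V → ℤ := fun u =>
  if u = v then -(∑ x ∈ Finset.univ.erase v, (k x v : ℤ)) else (k u v : ℤ)

/-- The lattice `Λ ⊆ ℤ^V` generated by the `c_v`. -/
def Lambda (k : V → V → ℕ) : AddSubgroup (V → ℤ) :=
  AddSubgroup.closure (Set.range (cvec k))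

/-- The total-degree homomorphism `ℤ^V → ℤ`. -/
def sumHom (V : Type) [Fintype V] : (V → ℤ) →+ ℤ :=
  { toFun := fun d => ∑ v, d v
    map_zero' := by simp
    map_add' := fun a b => by simp [Finset.sum_add_distrib] }

/-- `Z = {d ∈ ℤ^V : Σ_v d(v) = 0}`. -/
def Zsub (V : Type) [Fintype V] : AddSubgroup (V → ℤ) := (sumHom V).ker

/-- Remove the edge(s) joining `a` and `b` from the multigraph. -/
def removeEdge (k : V → V → ℕ) (a b : V) : V → V → ℕ := fun u v =>
  if (u = a ∧ v = b) ∨ (u = b ∧ v = a) then 0 else k u v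

/-- `a`–`b` is a bridge: a single non-loop edge whose removal disconnects the graph. -/
def IsBridge (k : V → V → ℕ) (a b : V) : Prop :=
  a ≠ b ∧ k a b = 1 ∧ ¬ (graphOf (removeEdge k a b)).Connected

/-- `A` induces a connected sub-multigraph. -/
def IsConnectedSubset (k : V → V → ℕ) (A : Finset V) : Prop :=
  ((graphOf k).induce (A : Set V)).Connected

/-- The equivalence relation `≈` on `V` generated by bridges. -/
def contractSetoid (k : V → V → ℕ) : Setoid V :=
  ⟨Relation.EqvGen (fun u v => IsBridge k u v), Relation.EqvGen.is_equivalence _⟩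

/-- The vertex set `V² = V/≈` of the contracted graph `Γ²`. -/
def V2 (k : V → V → ℕ) : Type := Quotient (contractSetoid k)

instance (k : V → V → ℕ) : Finite (V2 k) := Quotient.finite _

instance (k : V → V → ℕ) : Fintype (V2 k) := Fintype.ofFinite _

/-- The fiber of the quotient map `φ : V → V²` over a class `c`. -/
def fiber (k : V → V → ℕ) (c : V2 k) : Finset V :=
  Finset.univ.filter (fun v => Quotient.mk (contractSetoid k) v = c)

/-- The multiplicity function `k²` of the contracted graph `Γ²`. -/
def k2 (k : V → V → ℕ) : V2 k → V2 k → ℕ := fun c c' =>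
  if c = c' then
    (∑ v ∈ fiber k c, k v v) +
      (∑ u ∈ fiber k c, ∑ v ∈ (fiber k c).erase u,
        if IsBridge k u v then 0 else k u v) / 2
  else ∑ u ∈ fiber k c, ∑ v ∈ fiber k c', k u v

/-- The weight function `w²` of the contracted weighted graph `(Γ²,w²)`. -/
def w2 (k : V → V → ℕ) (w : V → ℕ) : V2 k → ℕ := fun c => ∑ v ∈ fiber k c, w v

/-- The pushforward `α(d)` of a multidegree to the contracted graph. -/
def alphaMap (k : V → V → ℕ) (d : V → ℤ) : V2 k → ℤ := fun c => ∑ v ∈ fiber k c, d v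

/-- The setoid on multidegrees of total degree `D`: two are equivalent if their
difference lies in `Λ`; the quotient is `Δ^d`. -/
def degSetoid (k : V → V → ℕ) (D : ℤ) : Setoid {d : V → ℤ // (∑ v, d v) = D} :=
  ⟨fun a b => (a : V → ℤ) - (b : V → ℤ) ∈ Lambda k, by
    constructor
    · intro a; simpa using (Lambda k).zero_mem
    · intro a b h; have h2 := (Lambda k).neg_mem h; rwa [neg_sub] at h2
    · intro a b c h1 h2
      have h3 := (Lambda k).add_mem h1 h2
      rwa [sub_add_sub_cancel] at h3⟩

/-- Number of edges of the sub-multigraph induced on `A`. -/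
def numEdgesIn (k : V → V → ℕ) (A : Finset V) : ℕ :=
  (∑ v ∈ A, k v v) + (∑ u ∈ A, ∑ v ∈ A.erase u, k u v) / 2

/-- Blow-up of a multigraph at the single bridge `a`–`b`: one exceptional
vertex is inserted in the middle of the bridge. -/
def blowK (k : V → V → ℕ) (a b : V) : (V ⊕ Unit) → (V ⊕ Unit) → ℕ
  | Sum.inl u, Sum.inl v => if (u = a ∧ v = b) ∨ (u = b ∧ v = a) then 0 else k u v
  | Sum.inl u, Sum.inr _ => if u = a ∨ u = b then 1 else 0
  | Sum.inr _, Sum.inl v => if v = a ∨ v = b then 1 else 0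
  | Sum.inr _, Sum.inr _ => 0

/-- Weight function of the blow-up at one bridge: exceptional vertex has weight 0. -/
def blowW (w : V → ℕ) : V ⊕ Unit → ℕ
  | Sum.inl v => w v
  | Sum.inr _ => 0

/-- Blow-up of a multigraph at a set `S` of bridges (given as ordered pairs):
one exceptional vertex is inserted in the middle of each bridge of `S`. -/
def blowKS (k : V → V → ℕ) (S : Finset (V × V)) :
    (V ⊕ {p : V × V // p ∈ S}) → (V ⊕ {p : V × V // p ∈ S}) → ℕ
  | Sum.inl u, Sum.inl v => if (u, v) ∈ S ∨ (v, u) ∈ S then 0 else k u v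
  | Sum.inl u, Sum.inr e => if u = e.1.1 ∨ u = e.1.2 then 1 else 0
  | Sum.inr e, Sum.inl v => if v = e.1.1 ∨ v = e.1.2 then 1 else 0
  | Sum.inr _, Sum.inr _ => 0

/-- Weight function of the blow-up at a set of bridges. -/
def blowWS (w : V → ℕ) (S : Finset (V × V)) : (V ⊕ {p : V × V // p ∈ S}) → ℕ
  | Sum.inl v => w v
  | Sum.inr _ => 0

/-- Strictly balanced multidegree of total degree `D` on the blow-up `Γ̂_S`:
balanced (with degree 1 on each exceptional vertex), and the inequality is
strict for every proper nonempty `A` such that some edge between `A` and its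
complement has no exceptional endpoint. -/
def IsStrictlyBalancedBlowS (k : V → V → ℕ) (w : V → ℕ) (S : Finset (V × V)) (D : ℤ)
    (dh : (V ⊕ {p : V × V // p ∈ S}) → ℤ) : Prop :=
  IsBalanced (blowKS k S) (blowWS w S) D dh ∧
    (∀ e : {p : V × V // p ∈ S}, dh (Sum.inr e) = 1) ∧
    ∀ A : Finset (V ⊕ {p : V × V // p ∈ S}), A ≠ ∅ → A ≠ Finset.univ →
      (∃ u v : V, Sum.inl u ∈ A ∧ Sum.inl v ∉ A ∧ 0 < blowKS k S (Sum.inl u) (Sum.inl v)) →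
      mA (blowKS k S) (blowWS w S) D A < (degA dh A : ℚ)

/-- Multiplicity function of the vine graph: two vertices joined by `δ` edges,
no loops. -/
def vineK (δ : ℕ) : Fin 2 → Fin 2 → ℕ := fun u v => if u = v then 0 else δ

/-- Weight function of the vine graph with weights `g₁, g₂`. -/
def vineW (g1 g2 : ℕ) : Fin 2 → ℕ := fun v => if v = 0 then g1 else g2

/-- The data of a stable vine graph of genus `g` with weights `g₁, g₂` and `δ` edges. -/
def StableVine (g : ℤ) (g1 g2 δ : ℕ) : Prop :=
  2 ≤ δ ∧ ((g1 = 0 ∨ g2 = 0) → 3 ≤ δ) ∧ (g1 : ℤ) + (g2 : ℤ) + (δ : ℤ) - 1 = g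

end

/-! Each `c_v` has total degree `0`, so `Λ ⊆ Z`. Conversely, if `u – v` is a bridge and `A` is the
side of `u`, the bridge is the only edge leaving `A`, so `∑_{x ∈ A} c_x = e_v - e_u`. Hence
`e_a - e_b ∈ Λ` for adjacent, and by connectedness for all, vertices `a, b`; these differences
generate `Z`. -/

variable {V : Type} [DecidableEq V]

lemma graphOf_removeEdge_adj (k : V → V → ℕ) (u v a b : V) :
    (graphOf (removeEdge k u v)).Adj a b ↔
      (graphOf k).Adj a b ∧ ¬((a = u ∧ b = v) ∨ (a = v ∧ b = u)) := by
  by_cases h : (a = u ∧ b = v) ∨ (a = v ∧ b = u)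
  · have h' : (b = u ∧ a = v) ∨ (b = v ∧ a = u) := by tauto
    simp [graphOf, removeEdge, h, h']
  · have h' : ¬((b = u ∧ a = v) ∨ (b = v ∧ a = u)) := by tauto
    simp [graphOf, removeEdge, h, h']

lemma single_sub_single_mem_of_reachable {G : SimpleGraph V} {H : AddSubgroup (V → ℤ)}
    (hadj : ∀ a b, G.Adj a b → Pi.single a 1 - Pi.single b 1 ∈ H) {a b : V}
    (hab : G.Reachable a b) : Pi.single a 1 - Pi.single b 1 ∈ H := by
  rw [SimpleGraph.reachable_iff_reflTransGen] at hab
  induction hab with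
  | refl => simp
  | tail _ hbc ih => simpa using H.add_mem ih (hadj _ _ hbc)

variable [Fintype V]

lemma Zsub_le_of_single_sub_single_mem (H : AddSubgroup (V → ℤ)) (v₀ : V)
    (h : ∀ a, Pi.single a 1 - Pi.single v₀ 1 ∈ H) : Zsub V ≤ H := by
  intro d (hd : ∑ a, d a = 0)
  have hdecomp : d = ∑ a, d a • (Pi.single a 1 - Pi.single v₀ (1 : ℤ)) := by
    ext y
    simp [Finset.sum_apply, Pi.single_apply, mul_sub, Finset.sum_sub_distrib, hd]
  rw [hdecomp]
  exact sum_mem fun a _ => AddSubgroup.zsmul_mem _ (h a) _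

lemma sum_cvec_eq_zero (k : V → V → ℕ) (v : V) : ∑ u, cvec k v u = 0 := by
  simp [cvec, Finset.sum_ite, Finset.filter_ne', Finset.filter_eq']

lemma Lambda_le_Zsub (k : V → V → ℕ) : Lambda k ≤ Zsub V := by
  rw [Lambda, AddSubgroup.closure_le]
  rintro _ ⟨v, rfl⟩
  exact sum_cvec_eq_zero k v

lemma sum_cvec_apply {k : V → V → ℕ} (hsym : ∀ u v, k u v = k v u) (B : Finset V) (y : V) :
    (∑ x ∈ B, cvec k x) y =
      if y ∈ B then -∑ z ∈ Bᶜ, (k z y : ℤ) else ∑ x ∈ B, (k x y : ℤ) := by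
  have hoff : ∀ x, x ≠ y → cvec k x y = k x y := fun x hx => by simp [cvec, hx.symm, hsym]
  rw [Finset.sum_apply]
  split_ifs with hy
  · rw [← Finset.add_sum_erase _ _ hy,
      Finset.sum_congr rfl fun x hx => hoff x (Finset.ne_of_mem_erase hx)]
    simp only [cvec, ↓reduceIte]
    rw [Finset.sum_erase_eq_sub (Finset.mem_univ y), Finset.sum_erase_eq_sub hy,
      ← Finset.sum_compl_add_sum B]
    ring
  · exact Finset.sum_congr rfl fun x hx => hoff x (by rintro rfl; exact hy hx)

lemma sum_cvec_eq_of_forall_cross {k : V → V → ℕ} (hsym : ∀ u v, k u v = k v u) {A : Finset V}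
    {u v : V} (hu : u ∈ A) (hv : v ∉ A)
    (hcross : ∀ x ∈ A, ∀ y ∉ A, k x y = if x = u ∧ y = v then 1 else 0) :
    ∑ x ∈ A, cvec k x = Pi.single v 1 - Pi.single u 1 := by
  ext y
  rw [sum_cvec_apply hsym]
  split_ifs with hy
  · have hyv : y ≠ v := by rintro rfl; exact hv hy
    rw [Finset.sum_congr rfl fun z hz => by rw [hsym, hcross y hy z (Finset.mem_compl.1 hz)]]
    obtain rfl | hyu := eq_or_ne y u <;> simp [*]
  · have hyu : y ≠ u := by rintro rfl; exact hy hu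
    rw [Finset.sum_congr rfl fun x hx => by rw [hcross x hx y hy]]
    obtain rfl | hyv := eq_or_ne y v <;> simp [*]

open Classical in
lemma IsBridge.exists_side {k : V → V → ℕ} (hconn : (graphOf k).Connected) {u v : V}
    (hbr : IsBridge k u v) :
    ∃ A : Finset V, u ∈ A ∧ v ∉ A ∧
      ∀ x ∈ A, ∀ y ∉ A, k x y = if x = u ∧ y = v then 1 else 0 := by
  obtain ⟨-, hkuv, hdisc⟩ := hbr
  set G' := graphOf (removeEdge k u v)
  have hv : ¬G'.Reachable u v := by
    intro huv
    have hle : (graphOf k).Reachable ≤ G'.Reachable := by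
      simp only [SimpleGraph.reachable_eq_reflTransGen]
      refine Relation.reflTransGen_closed fun a b hab => ?_
      rw [← SimpleGraph.reachable_iff_reflTransGen]
      by_cases he : (a = u ∧ b = v) ∨ (a = v ∧ b = u)
      · rcases he with ⟨rfl, rfl⟩ | ⟨rfl, rfl⟩
        exacts [huv, huv.symm]
      · exact ((graphOf_removeEdge_adj k u v a b).2 ⟨hab, he⟩).reachable
    exact hdisc ((SimpleGraph.connected_iff _).2
      ⟨fun a b => hle _ _ (hconn.preconnected a b), hconn.nonempty⟩)
  refine ⟨Finset.univ.filter (G'.Reachable u), by simp, by simpa using hv, ?_⟩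
  simp only [Finset.mem_filter, Finset.mem_univ, true_and]
  intro x hx y hy
  split_ifs with he
  · rwa [he.1, he.2]
  · by_contra hpos
    have hxy : x ≠ y := by rintro rfl; exact hy hx
    have hxv : x ≠ v := by rintro rfl; exact hv hx
    have hadj : G'.Adj x y := (graphOf_removeEdge_adj k u v x y).2
      ⟨⟨hxy, Or.inl (Nat.pos_of_ne_zero hpos)⟩, by tauto⟩
    exact hy (hx.trans hadj.reachable)

lemma single_sub_single_mem_Lambda_of_adj {k : V → V → ℕ} (hsym : ∀ u v, k u v = k v u)
    (hconn : (graphOf k).Connected) (htree : ∀ u v : V, u ≠ v → 0 < k u v → IsBridge k u v)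
    {a b : V} (hab : (graphOf k).Adj a b) : Pi.single a 1 - Pi.single b 1 ∈ Lambda k := by
  obtain ⟨hne, hpos⟩ := hab
  have hbr : IsBridge k a b := htree a b hne (by rwa [hsym b a, or_self] at hpos)
  obtain ⟨A, ha, hb, hcross⟩ := hbr.exists_side hconn
  have hmem : ∑ x ∈ A, cvec k x ∈ Lambda k :=
    sum_mem fun x _ => AddSubgroup.subset_closure ⟨x, rfl⟩
  rw [sum_cvec_eq_of_forall_cross hsym ha hb hcross] at hmem
  simpa using neg_mem hmem

/-- In a connected tree-like multigraph (every edge joining two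
distinct vertices is a bridge), `Λ = Z`, i.e. the degree class group is trivial. -/
theorem stmt1 (V : Type) [Fintype V] [DecidableEq V] (k : V → V → ℕ)
    (hsym : ∀ u v, k u v = k v u) (hconn : (graphOf k).Connected)
    (htree : ∀ u v : V, u ≠ v → 0 < k u v → IsBridge k u v) :
    Lambda k = Zsub V := by
  obtain ⟨v₀⟩ := hconn.nonempty
  refine le_antisymm (Lambda_le_Zsub k) (Zsub_le_of_single_sub_single_mem _ v₀ fun a => ?_)
  exact single_sub_single_mem_of_reachable
    (fun _ _ => single_sub_single_mem_Lambda_of_adj hsym hconn htree) (hconn.preconnected a v₀)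
end

section
/- Let (Γ,w) be a stable weighted graph of genus g ≥ 2 and let d, d' be balanced multidegrees of the same total degree d with d − d' ∈ Λ. If d is strictly balanced, then d' = d. Conversely, if d is balanced but not strictly balanced, then there exists a balanced multidegree d' ≠ d of total degree d with d − d' ∈ Λ. In other words, a class in Δ^d contains exactly one balanced multidegree if and only if that balanced multidegree is strictly balanced. -/
/-!
Equivalent multidegrees differ by a Laplacian `L n = ∑ v, n v • c_v` with `n : V → ℤ`, and
`(L n)_B = ∑_{u ∈ B, v ∉ B} (n v - n u) k(u,v)`.

If `A` is the set where `n` is maximal, then `(L n)_A ≤ -δ_A`. Since `m_A + m_{Aᶜ} = d - δ_A`,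
a balanced `d'` has `d'_A ≤ m_A + δ_A`, hence `d = d' + L n` has `d_A ≤ m_A`. For strictly
balanced `d` this forces `A = V`, so `n` is constant and `L n = 0`.

Conversely, if `d_A = m_A` for a proper nonempty `A`, then `d - L 1_A` is again balanced, by the
identity `m_{A∩B} + m_{A∪B} = m_A + m_B + e(A∖B, B∖A)`, and its degree on `A` is `d_A + δ_A`,
where `δ_A > 0` by connectedness.
-/

open Finset

noncomputable section
open scoped Classical

variable {V : Type} [Fintype V] [DecidableEq V]

theorem Finset.sum_sum_eq_sum_sum_ite {α M : Type*} [Fintype α] [DecidableEq α]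
    [AddCommMonoid M] (X Y : Finset α) (f : α → α → M) :
    ∑ u ∈ X, ∑ v ∈ Y, f u v = ∑ u, ∑ v, if u ∈ X ∧ v ∈ Y then f u v else 0 := by
  simp [ite_and, Finset.sum_ite_irrel, Finset.sum_ite_mem]

def crossEdges (k : V → V → ℕ) (X Y : Finset V) : ℤ := ∑ u ∈ X, ∑ v ∈ Y, (k u v : ℤ)

theorem crossEdges_eq_sum_ite (k : V → V → ℕ) (X Y : Finset V) :
    crossEdges k X Y = ∑ u, ∑ v, if u ∈ X ∧ v ∈ Y then (k u v : ℤ) else 0 :=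
  Finset.sum_sum_eq_sum_sum_ite X Y _

theorem deltaA_eq_crossEdges (k : V → V → ℕ) (A : Finset V) :
    deltaA k A = crossEdges k A Aᶜ := rfl

omit [Fintype V] [DecidableEq V] in
theorem crossEdges_nonneg (k : V → V → ℕ) (X Y : Finset V) : 0 ≤ crossEdges k X Y := by
  unfold crossEdges
  positivity

omit [Fintype V] [DecidableEq V] in
theorem crossEdges_comm {k : V → V → ℕ} (hsym : ∀ u v, k u v = k v u) (X Y : Finset V) :
    crossEdges k X Y = crossEdges k Y X := by
  unfold crossEdges
  rw [Finset.sum_comm]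
  simp only [hsym]

theorem deltaA_compl {k : V → V → ℕ} (hsym : ∀ u v, k u v = k v u) (A : Finset V) :
    deltaA k Aᶜ = deltaA k A := by
  rw [deltaA_eq_crossEdges, compl_compl, crossEdges_comm hsym, deltaA_eq_crossEdges]

theorem deltaA_inter_add_deltaA_union {k : V → V → ℕ} (hsym : ∀ u v, k u v = k v u)
    (A B : Finset V) :
    deltaA k (A ∩ B) + deltaA k (A ∪ B) + 2 * crossEdges k (A \ B) (B \ A)
      = deltaA k A + deltaA k B := by
  rw [two_mul]
  nth_rw 2 [crossEdges_comm hsym]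
  simp only [deltaA_eq_crossEdges, crossEdges_eq_sum_ite, ← Finset.sum_add_distrib]
  refine Finset.sum_congr rfl fun u _ => Finset.sum_congr rfl fun v _ => ?_
  simp only [Finset.mem_inter, Finset.mem_union, Finset.mem_sdiff, Finset.mem_compl]
  by_cases u ∈ A <;> by_cases u ∈ B <;> by_cases v ∈ A <;> by_cases v ∈ B <;> simp [*]

theorem even_sum_sum_erase {k : V → V → ℕ} (hsym : ∀ u v, k u v = k v u) :
    Even (∑ u, ∑ v ∈ univ.erase u, k u v) := by
  rw [← ZMod.natCast_eq_zero_iff_even]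
  push_cast
  -- the swap `(u, v) ↦ (v, u)` pairs off equal terms, which cancel mod 2
  simp only [← Finset.filter_ne', Finset.sum_filter, ← Fintype.sum_prod_type']
  refine Finset.sum_ninvolution Prod.swap (fun p => ?_)
    (fun p hp h => hp (if_neg (not_not.2 (congrArg Prod.fst h))))
    (fun _ => Finset.mem_univ _) Prod.swap_swap
  rw [Prod.fst_swap, Prod.snd_swap, hsym p.2 p.1]
  simp only [ne_comm (a := p.2), CharTwo.add_self_eq_zero]

theorem wA_univ {k : V → V → ℕ} (w : V → ℕ) (hsym : ∀ u v, k u v = k v u) :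
    wA k w univ = 2 * genus k w - 2 := by
  obtain ⟨m, hm⟩ := even_sum_sum_erase hsym
  have hhalf : (∑ u, ∑ v ∈ univ.erase u, k u v) / 2 = m := by omega
  have hvalency : ∑ v, ∑ u ∈ univ.erase v, (k u v : ℤ) = m + m := by
    rw [← Nat.cast_add, ← hm]
    push_cast
    exact Finset.sum_congr rfl fun v _ => Finset.sum_congr rfl fun u _ => by rw [hsym]
  simp only [wA, genus, numEdges, hhalf, Finset.sum_add_distrib, Finset.sum_sub_distrib,
    hvalency, ← Finset.mul_sum, Finset.sum_const, Finset.card_univ]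
  push_cast
  ring

theorem mA_add_mA_compl {k : V → V → ℕ} {w : V → ℕ} (hsym : ∀ u v, k u v = k v u)
    (hg : 2 ≤ genus k w) (D : ℤ) (A : Finset V) :
    mA k w D A + mA k w D Aᶜ = D - deltaA k A := by
  have hpos : ((2 * genus k w - 2 : ℤ) : ℚ) ≠ 0 := by
    exact_mod_cast (by omega : 2 * genus k w - 2 ≠ 0)
  have hw : (wA k w A : ℚ) + wA k w Aᶜ = ((2 * genus k w - 2 : ℤ) : ℚ) := by
    rw [← wA_univ w hsym]
    exact_mod_cast Finset.sum_add_sum_compl A _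
  have hsplit : (D : ℚ) * wA k w A / ((2 * genus k w - 2 : ℤ) : ℚ)
      + D * wA k w Aᶜ / ((2 * genus k w - 2 : ℤ) : ℚ) = D := by
    rw [← add_div, ← mul_add, hw, mul_div_cancel_right₀ _ hpos]
  unfold mA
  rw [deltaA_compl hsym]
  linarith

theorem mA_inter_add_mA_union {k : V → V → ℕ} (w : V → ℕ) (hsym : ∀ u v, k u v = k v u)
    (D : ℤ) (A B : Finset V) :
    mA k w D (A ∩ B) + mA k w D (A ∪ B)
      = mA k w D A + mA k w D B + crossEdges k (A \ B) (B \ A) := by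
  have hw : wA k w (A ∩ B) + wA k w (A ∪ B) = wA k w A + wA k w B := by
    rw [add_comm]; exact Finset.sum_union_inter
  have hδ := deltaA_inter_add_deltaA_union hsym A B
  unfold mA
  qify at hw hδ
  linear_combination ((D : ℚ) / ((2 * genus k w - 2 : ℤ) : ℚ)) * hw - (1 / 2 : ℚ) * hδ

def laplacian (k : V → V → ℕ) (n : V → ℤ) : V → ℤ := ∑ v, n v • cvec k v

theorem mem_Lambda_iff {k : V → V → ℕ} {e : V → ℤ} :
    e ∈ Lambda k ↔ ∃ n, e = laplacian k n :=
  AddSubgroup.mem_closure_range_iff_of_fintype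

theorem laplacian_mem_Lambda (k : V → V → ℕ) (n : V → ℤ) : laplacian k n ∈ Lambda k :=
  mem_Lambda_iff.2 ⟨n, rfl⟩

theorem cvec_apply {k : V → V → ℕ} (hsym : ∀ u v, k u v = k v u) (v u : V) :
    cvec k v u = k u v - if u = v then ∑ x, (k u x : ℤ) else 0 := by
  unfold cvec
  split_ifs with h
  · subst h
    rw [← Finset.sum_erase_add _ _ (Finset.mem_univ u)]
    simp only [hsym _ u]
    ring
  · ring

theorem laplacian_apply {k : V → V → ℕ} (hsym : ∀ u v, k u v = k v u) (n : V → ℤ) (u : V) :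
    laplacian k n u = ∑ v, (n v - n u) * k u v := by
  simp only [laplacian, Finset.sum_apply, Pi.smul_apply, smul_eq_mul, cvec_apply hsym,
    mul_sub, mul_ite, mul_zero, Finset.sum_sub_distrib, Finset.sum_ite_eq, Finset.mem_univ,
    if_true, sub_mul, Finset.mul_sum]

omit [Fintype V] [DecidableEq V] in
theorem degA_sub (d d' : V → ℤ) (A : Finset V) : degA (d - d') A = degA d A - degA d' A :=
  Finset.sum_sub_distrib _ _

theorem degA_laplacian {k : V → V → ℕ} (hsym : ∀ u v, k u v = k v u) (n : V → ℤ)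
    (B : Finset V) : degA (laplacian k n) B = ∑ u ∈ B, ∑ v ∈ Bᶜ, (n v - n u) * k u v := by
  have hanti : ∑ u ∈ B, ∑ v ∈ B, (n v - n u) * (k u v : ℤ) = 0 := by
    have h : ∑ u ∈ B, ∑ v ∈ B, (n v - n u) * (k u v : ℤ)
        = ∑ u ∈ B, ∑ v ∈ B, -((n v - n u) * (k u v : ℤ)) := by
      rw [Finset.sum_comm]
      exact Finset.sum_congr rfl fun _ _ => Finset.sum_congr rfl fun _ _ => by rw [hsym]; ring
    simp only [Finset.sum_neg_distrib] at h
    linarith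
  calc degA (laplacian k n) B
      = ∑ u ∈ B, (∑ v ∈ B, (n v - n u) * k u v + ∑ v ∈ Bᶜ, (n v - n u) * k u v) :=
        Finset.sum_congr rfl fun u _ => by rw [laplacian_apply hsym, Finset.sum_add_sum_compl]
    _ = _ := by rw [Finset.sum_add_distrib, hanti, zero_add]

theorem degA_laplacian_univ {k : V → V → ℕ} (hsym : ∀ u v, k u v = k v u) (n : V → ℤ) :
    degA (laplacian k n) univ = 0 := by
  simp [degA_laplacian hsym]

theorem degA_laplacian_le_neg_deltaA {k : V → V → ℕ} (hsym : ∀ u v, k u v = k v u)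
    {n : V → ℤ} {A : Finset V} (hA : ∀ u ∈ A, ∀ v ∉ A, n v < n u) :
    degA (laplacian k n) A ≤ -deltaA k A := by
  rw [degA_laplacian hsym, deltaA, ← Finset.sum_neg_distrib]
  refine Finset.sum_le_sum fun u hu => ?_
  rw [← Finset.sum_neg_distrib]
  refine Finset.sum_le_sum fun v hv => ?_
  have hlt := hA u hu v (Finset.mem_compl.1 hv)
  nlinarith [Int.natCast_nonneg (k u v)]

theorem degA_laplacian_indicator {k : V → V → ℕ} (hsym : ∀ u v, k u v = k v u)
    (A B : Finset V) :
    degA (laplacian k fun v => if v ∈ A then 1 else 0) B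
      = crossEdges k (B \ A) (A \ B) - crossEdges k (A ∩ B) (A ∪ B)ᶜ := by
  rw [degA_laplacian hsym, Finset.sum_sum_eq_sum_sum_ite, crossEdges_eq_sum_ite,
    crossEdges_eq_sum_ite, ← Finset.sum_sub_distrib]
  refine Finset.sum_congr rfl fun u _ => ?_
  rw [← Finset.sum_sub_distrib]
  refine Finset.sum_congr rfl fun v _ => ?_
  simp only [Finset.mem_inter, Finset.mem_union, Finset.mem_sdiff, Finset.mem_compl]
  by_cases u ∈ A <;> by_cases u ∈ B <;> by_cases v ∈ A <;> by_cases v ∈ B <;> simp [*]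

theorem one_le_deltaA {k : V → V → ℕ} (hsym : ∀ u v, k u v = k v u)
    (hconn : (graphOf k).Connected) {A : Finset V} (hA : A.Nonempty) (hA' : A ≠ univ) :
    1 ≤ deltaA k A := by
  obtain ⟨a, ha⟩ := hA
  obtain ⟨b, hb⟩ := by simpa [Finset.eq_univ_iff_forall] using hA'
  obtain ⟨e, -, he, he'⟩ :=
    (hconn.preconnected a b).some.exists_boundary_dart (A : Set V) ha hb
  have hk : 0 < k e.fst e.snd := e.adj.2.elim id fun h => hsym e.snd e.fst ▸ h
  calc (1 : ℤ) ≤ k e.fst e.snd := by exact_mod_cast hk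
    _ ≤ ∑ v ∈ Aᶜ, (k e.fst v : ℤ) :=
      Finset.single_le_sum (f := fun v => (k e.fst v : ℤ)) (fun _ _ => by positivity)
        (Finset.mem_compl.2 he')
    _ ≤ deltaA k A :=
      Finset.single_le_sum (f := fun u => ∑ v ∈ Aᶜ, (k u v : ℤ)) (fun _ _ => by positivity) he

theorem IsBalanced.degA_le {k : V → V → ℕ} {w : V → ℕ} {D : ℤ} {d : V → ℤ}
    (hsym : ∀ u v, k u v = k v u) (hg : 2 ≤ genus k w) (hd : IsBalanced k w D d)
    (A : Finset V) : (degA d A : ℚ) ≤ mA k w D A + deltaA k A := by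
  have hcompl := hd.2 Aᶜ
  have hm := mA_add_mA_compl hsym hg D A
  have htot : degA d A + degA d Aᶜ = D := (Finset.sum_add_sum_compl A d).trans hd.1
  qify at htot
  linarith

theorem IsStrictlyBalanced.eq_of_isBalanced {k : V → V → ℕ} {w : V → ℕ} {D : ℤ}
    {d d' : V → ℤ} (hsym : ∀ u v, k u v = k v u) (hg : 2 ≤ genus k w)
    (hd : IsStrictlyBalanced k w D d) (hd' : IsBalanced k w D d')
    (hmem : d - d' ∈ Lambda k) : d' = d := by
  by_contra hne
  obtain ⟨n, hn⟩ := mem_Lambda_iff.1 hmem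
  have : Nonempty V := ⟨(Function.ne_iff.1 hne).choose⟩
  obtain ⟨x, hx⟩ := Finite.exists_max n
  set A := univ.filter fun v => n v = n x
  have hsep : ∀ u ∈ A, ∀ v ∉ A, n v < n u := by
    intro u hu v hv
    simp only [A, Finset.mem_filter, Finset.mem_univ, true_and] at hu hv
    exact hu ▸ lt_of_le_of_ne (hx v) hv
  have hA : A ≠ univ := by
    intro hA
    have hconst : ∀ v, n v = n x := fun v => by
      have hv : v ∈ A := hA ▸ Finset.mem_univ v
      simpa [A] using hv
    refine hne (sub_eq_zero.1 ?_).symm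
    rw [hn]
    funext u
    simp [laplacian_apply hsym, hconst]
  have hlap := degA_laplacian_le_neg_deltaA hsym hsep
  rw [← hn, degA_sub] at hlap
  have hstrict := hd.2 A (Finset.nonempty_iff_ne_empty.1 ⟨x, by simp [A]⟩) hA
  have hle := hd'.degA_le hsym hg A
  qify at hlap
  linarith

theorem IsBalanced.sub_laplacian_indicator {k : V → V → ℕ} {w : V → ℕ} {D : ℤ}
    {d : V → ℤ} (hsym : ∀ u v, k u v = k v u) (hd : IsBalanced k w D d) {A : Finset V}
    (hA : (degA d A : ℚ) = mA k w D A) :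
    IsBalanced k w D (d - laplacian k fun v => if v ∈ A then 1 else 0) := by
  refine ⟨by rw [degA_sub, degA_laplacian_univ hsym, hd.1, sub_zero], fun B => ?_⟩
  have hmod : degA d (A ∩ B) + degA d (A ∪ B) = degA d A + degA d B := by
    rw [add_comm]; exact Finset.sum_union_inter
  have htwist := degA_laplacian_indicator hsym A B
  have hm := mA_inter_add_mA_union w hsym D A B
  have hinter := hd.2 (A ∩ B)
  have hunion := hd.2 (A ∪ B)
  have hcomm := crossEdges_comm hsym (A \ B) (B \ A)
  have hnonneg := crossEdges_nonneg k (A ∩ B) (A ∪ B)ᶜ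
  rw [degA_sub]
  qify at hmod htwist hcomm hnonneg ⊢
  linarith

theorem IsBalanced.exists_ne_of_not_isStrictlyBalanced {k : V → V → ℕ} {w : V → ℕ} {D : ℤ}
    {d : V → ℤ} (hsym : ∀ u v, k u v = k v u) (hconn : (graphOf k).Connected)
    (hd : IsBalanced k w D d) (hns : ¬ IsStrictlyBalanced k w D d) :
    ∃ d', IsBalanced k w D d' ∧ d' ≠ d ∧ d - d' ∈ Lambda k := by
  obtain ⟨A, hA0, hA, htight⟩ :
      ∃ A : Finset V, A ≠ ∅ ∧ A ≠ univ ∧ (degA d A : ℚ) = mA k w D A := by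
    by_contra h
    exact hns ⟨hd, fun A hA0 hA => (hd.2 A).lt_of_ne fun h' => h ⟨A, hA0, hA, h'.symm⟩⟩
  refine ⟨_, hd.sub_laplacian_indicator hsym htight, fun heq => ?_,
    by rw [sub_sub_cancel]; exact laplacian_mem_Lambda k _⟩
  have hδ := one_le_deltaA hsym hconn (Finset.nonempty_iff_ne_empty.2 hA0) hA
  have htwist := degA_laplacian_indicator hsym A A
  rw [sub_eq_self.1 heq, Finset.sdiff_self, Finset.inter_self, Finset.union_self,
    ← deltaA_eq_crossEdges] at htwist
  simp only [degA, Pi.zero_apply, Finset.sum_const_zero, crossEdges, Finset.sum_empty,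
    zero_sub, zero_eq_neg] at htwist
  omega

/-- A class in `Δ^d` contains exactly one balanced multidegree iff
that balanced multidegree is strictly balanced. -/
theorem stmt3 (V : Type) [Fintype V] [DecidableEq V] (k : V → V → ℕ) (w : V → ℕ)
    (hsym : ∀ u v, k u v = k v u) (hstab : IsStable k w) (hg : 2 ≤ genus k w)
    (D : ℤ) (d : V → ℤ) (hd : IsBalanced k w D d) :
    (IsStrictlyBalanced k w D d →
      ∀ d' : V → ℤ, IsBalanced k w D d' → d - d' ∈ Lambda k → d' = d) ∧
    (¬ IsStrictlyBalanced k w D d →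
      ∃ d' : V → ℤ, IsBalanced k w D d' ∧ d' ≠ d ∧ d - d' ∈ Lambda k) :=
  ⟨fun hsb _ hd' hmem => hsb.eq_of_isBalanced hsym hg hd' hmem,
    hd.exists_ne_of_not_isStrictlyBalanced hsym hstab.1⟩

end
end
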